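/- arXiv:2407.20473 — 5 statements merged into one kernel-verified Lean document; each statement's English description precedes it below -/
import Mathlib

section
/- Let X and Y be normed spaces, F : X ⇉ Y a set-valued mapping, and (x̄,ȳ) ∈ gph F. If F has the Aubin property at (x̄,ȳ) with modulus τ > 0, then there is a δ > 0 such that ‖x*‖ ≤ τ‖y*‖ for all (x,y) ∈ gph F ∩ B_δ(x̄,ȳ) and all (x*,y*) ∈ N^F_{gph F}(x,y). -/
open Set Filter Metric Topology Pointwise
open scoped ENNReal

noncomputable section

variable {X Y Z : Type*}

/-- Clarke tangent cone. -/
def clarkeTangentCone [NormedAddCommGroup X] [NormedSpace ℝ X] (Ω : Set X) (xbar : X) : Set X :=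
  {z | ∀ x : ℕ → X, (∀ k, x k ∈ Ω) → Tendsto x atTop (𝓝 xbar) →
    ∀ t : ℕ → ℝ, (∀ k, 0 < t k) → Tendsto t atTop (𝓝 0) →
    ∃ z' : ℕ → X, Tendsto z' atTop (𝓝 z) ∧ ∀ k, x k + t k • z' k ∈ Ω}

/-- Clarke normal cone. -/
def clarkeNormalCone [NormedAddCommGroup X] [NormedSpace ℝ X] (Ω : Set X) (xbar : X) :
    Set (X →L[ℝ] ℝ) :=
  {p | xbar ∈ Ω ∧ ∀ z ∈ clarkeTangentCone Ω xbar, p z ≤ 0}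

/-- Fréchet normal cone. -/
def frechetNormalCone [NormedAddCommGroup X] [NormedSpace ℝ X] (Ω : Set X) (xbar : X) :
    Set (X →L[ℝ] ℝ) :=
  {p | xbar ∈ Ω ∧ ∀ ε > (0:ℝ), ∃ δ > (0:ℝ), ∀ x ∈ Ω ∩ ball xbar δ, p (x - xbar) ≤ ε * ‖x - xbar‖}

/-- Graph of a set-valued mapping. -/
def gph (F : X → Set Y) : Set (X × Y) := {p | p.2 ∈ F p.1}

/-- Clarke coderivative. -/
def clarkeCoderiv [NormedAddCommGroup X] [NormedSpace ℝ X] [NormedAddCommGroup Y]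
    [NormedSpace ℝ Y] (F : X → Set Y) (x : X) (y : Y) (q : Y →L[ℝ] ℝ) : Set (X →L[ℝ] ℝ) :=
  {p | p.coprod (-q) ∈ clarkeNormalCone (gph F) (x, y)}

/-- Fréchet coderivative. -/
def frechetCoderiv [NormedAddCommGroup X] [NormedSpace ℝ X] [NormedAddCommGroup Y]
    [NormedSpace ℝ Y] (F : X → Set Y) (x : X) (y : Y) (q : Y →L[ℝ] ℝ) : Set (X →L[ℝ] ℝ) :=
  {p | p.coprod (-q) ∈ frechetNormalCone (gph F) (x, y)}

/-- Aubin property with modulus τ. -/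
def AubinProperty [NormedAddCommGroup X] [NormedAddCommGroup Y]
    (F : X → Set Y) (xbar : X) (ybar : Y) (τ : ℝ) : Prop :=
  ∃ δ > (0:ℝ), ∀ x ∈ ball xbar δ, ∀ x' ∈ ball xbar δ, ∀ y ∈ F x' ∩ ball ybar δ,
    EMetric.infEdist y (F x) ≤ ENNReal.ofReal (τ * dist x x')

/-- Extremality of a pair of families of sets. -/
def pairExtremal [NormedAddCommGroup Z] (E1 E2 : Set (Set Z)) (zbar : Z) : Prop :=
  ∃ ρ : ℝ≥0∞, 0 < ρ ∧ ∀ ε > (0:ℝ), ∃ A1 ∈ E1, ∃ A2 ∈ E2,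
    EMetric.infEdist zbar A1 < ENNReal.ofReal ε ∧ EMetric.infEdist zbar A2 < ENNReal.ofReal ε ∧
    A1 ∩ A2 ∩ EMetric.ball zbar ρ = ∅

/-- Stationarity of a pair of families of sets. -/
def pairStationary [NormedAddCommGroup Z] (E1 E2 : Set (Set Z)) (zbar : Z) : Prop :=
  ∀ ε > (0:ℝ), ∃ ρ : ℝ, 0 < ρ ∧ ρ < ε ∧ ∃ A1 ∈ E1, ∃ A2 ∈ E2,
    EMetric.infEdist zbar A1 < ENNReal.ofReal (ε * ρ) ∧
    EMetric.infEdist zbar A2 < ENNReal.ofReal (ε * ρ) ∧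
    A1 ∩ A2 ∩ ball zbar ρ = ∅

/-- Approximate stationarity of a pair of families of sets. -/
def pairApproxStationary [NormedAddCommGroup Z] (E1 E2 : Set (Set Z)) (zbar : Z) : Prop :=
  ∀ ε > (0:ℝ), ∃ ρ : ℝ, 0 < ρ ∧ ρ < ε ∧ ∃ A1 ∈ E1, ∃ A2 ∈ E2,
    ∃ z1 ∈ ball zbar ε, ∃ z2 ∈ ball zbar ε,
    EMetric.infEdist z1 A1 < ENNReal.ofReal (ε * ρ) ∧
    EMetric.infEdist z2 A2 < ENNReal.ofReal (ε * ρ) ∧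
    ((fun a => a - z1) '' A1) ∩ ((fun a => a - z2) '' A2) ∩ ball 0 ρ = ∅

/-- The two families of subsets of X × Y associated with a triple {F, Ω, Ξ}. -/
def Xi1 (F : X → Set Y) : Set (Set (X × Y)) := {gph F}

def Xi2 (Ω : Set X) (Ξ : Set (Set Y)) : Set (Set (X × Y)) := {S | ∃ A ∈ Ξ, S = Ω ×ˢ A}

/-- Condition (QC)_C. -/
def QCclarke [NormedAddCommGroup X] [NormedSpace ℝ X] [NormedAddCommGroup Y] [NormedSpace ℝ Y]
    (F : X → Set Y) (Ω : Set X) (xbar : X) (ybar : Y) : Prop :=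
  ∃ ε > (0:ℝ), ∀ x1 y1, (x1, y1) ∈ gph F ∩ ball (xbar, ybar) ε →
    ∀ x2 ∈ Ω ∩ ball xbar ε, ∀ y1s : Y →L[ℝ] ℝ, ‖y1s‖ < ε →
    ∀ x1s ∈ clarkeCoderiv F x1 y1 y1s, ∀ x2s ∈ clarkeNormalCone Ω x2,
    ‖x1s‖ + ‖x2s‖ = 1 → ε ≤ ‖x1s + x2s‖

/-- Condition (QC)_F. -/
def QCfrechet [NormedAddCommGroup X] [NormedSpace ℝ X] [NormedAddCommGroup Y] [NormedSpace ℝ Y]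
    (F : X → Set Y) (Ω : Set X) (xbar : X) (ybar : Y) : Prop :=
  ∃ ε > (0:ℝ), ∀ x1 y1, (x1, y1) ∈ gph F ∩ ball (xbar, ybar) ε →
    ∀ x2 ∈ Ω ∩ ball xbar ε, ∀ y1s : Y →L[ℝ] ℝ, ‖y1s‖ < ε →
    ∀ x1s ∈ frechetCoderiv F x1 y1 y1s, ∀ x2s ∈ frechetNormalCone Ω x2,
    ‖x1s‖ + ‖x2s‖ = 1 → ε ≤ ‖x1s + x2s‖

/-- Approximate stationarity of a finite collection of families of sets. -/
def approxStationary {ι : Type*} [NormedAddCommGroup Z] (E : ι → Set (Set Z)) (zbar : Z) : Prop :=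
  ∀ ε > (0:ℝ), ∃ ρ : ℝ, 0 < ρ ∧ ρ < ε ∧ ∃ A : ι → Set Z, ∃ z : ι → Z,
    (∀ i, A i ∈ E i) ∧ (∀ i, z i ∈ ball zbar ε) ∧
    (∀ i, EMetric.infEdist (z i) (A i) < ENNReal.ofReal (ε * ρ)) ∧
    (⋂ i, (fun a => a - z i) '' A i) ∩ ball 0 ρ = ∅


set_option maxHeartbeats 1000000 in
theorem statement1 {X Y : Type*} [NormedAddCommGroup X] [NormedSpace ℝ X]
    [NormedAddCommGroup Y] [NormedSpace ℝ Y] (F : X → Set Y) (xbar : X) (ybar : Y)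
    (hxy : (xbar, ybar) ∈ gph F) (τ : ℝ) (hτ : 0 < τ)
    (hA : AubinProperty F xbar ybar τ) :
    ∃ δ > (0:ℝ), ∀ x y, (x, y) ∈ gph F ∩ ball (xbar, ybar) δ →
      ∀ (xs : X →L[ℝ] ℝ) (ys : Y →L[ℝ] ℝ),
      xs.coprod ys ∈ frechetNormalCone (gph F) (x, y) → ‖xs‖ ≤ τ * ‖ys‖ := by
  obtain ⟨δA, hδA, hAub⟩ := hA
  refine ⟨δA, hδA, ?_⟩
  rintro x y ⟨hyF, hball⟩ xs ys hN
  rw [mem_ball, Prod.dist_eq, max_lt_iff] at hball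
  obtain ⟨hdx, hdy⟩ := hball
  obtain ⟨hxyg, hNε⟩ := hN
  have key : ∀ u : X, xs u ≤ τ * ‖ys‖ * ‖u‖ := by
    intro u
    refine le_of_forall_pos_le_add ?_
    intro ε hε
    set c : ℝ := ‖ys‖ + 1 with hc_def
    have hc : 0 < c := by positivity
    have hysc : ‖ys‖ ≤ c := by simp [hc_def]
    set K : ℝ := max ‖u‖ (τ * ‖u‖ + 1) + 1 with hK_def
    have hKu : ‖u‖ ≤ K := by
      rw [hK_def]; linarith [le_max_left ‖u‖ (τ * ‖u‖ + 1)]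
    have hKt : τ * ‖u‖ + 1 ≤ K := by
      rw [hK_def]; linarith [le_max_right ‖u‖ (τ * ‖u‖ + 1)]
    have hK : 0 < K := lt_of_lt_of_le (by positivity) hKt
    set ε1 : ℝ := ε / (2 * K) with hε1_def
    have hε1 : 0 < ε1 := by positivity
    set ε3 : ℝ := min 1 (ε / (2 * c)) with hε3_def
    have hε3 : 0 < ε3 := lt_min one_pos (by positivity)
    have hε3le1 : ε3 ≤ 1 := min_le_left _ _
    have hε3le : ε3 ≤ ε / (2 * c) := min_le_right _ _
    obtain ⟨δ1, hδ1, hb⟩ := hNε ε1 hε1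
    have hdxpos : 0 < δA - dist x xbar := by linarith
    set t : ℝ := min (δ1 / (2 * K)) ((δA - dist x xbar) / (2 * (‖u‖ + 1))) with ht_def
    have ht : 0 < t := lt_min (by positivity) (by positivity)
    have htK : t * K ≤ δ1 / 2 := by
      have h1 : t ≤ δ1 / (2 * K) := min_le_left _ _
      calc t * K ≤ (δ1 / (2 * K)) * K := by nlinarith
        _ = δ1 / 2 := by field_simp
    have htu : t * ‖u‖ < δA - dist x xbar := by
      have h2 : t ≤ (δA - dist x xbar) / (2 * (‖u‖ + 1)) := min_le_right _ _
      have hu0 : (0 : ℝ) ≤ ‖u‖ := norm_nonneg u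
      have h3 : t * (‖u‖ + 1) ≤ ((δA - dist x xbar) / (2 * (‖u‖ + 1))) * (‖u‖ + 1) := by
        nlinarith
      have h4 : ((δA - dist x xbar) / (2 * (‖u‖ + 1))) * (‖u‖ + 1) = (δA - dist x xbar) / 2 := by
        field_simp
      nlinarith
    have hd1 : dist (x + t • u) x = t * ‖u‖ := by
      rw [dist_eq_norm, add_sub_cancel_left, norm_smul, Real.norm_eq_abs, abs_of_pos ht]
    have hx' : x + t • u ∈ ball xbar δA := by
      rw [mem_ball]
      calc dist (x + t • u) xbar ≤ dist (x + t • u) x + dist x xbar := dist_triangle _ _ _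
        _ = t * ‖u‖ + dist x xbar := by rw [hd1]
        _ < δA := by linarith
    have haub := hAub (x + t • u) hx' x (mem_ball.mpr hdx) y ⟨hyF, mem_ball.mpr hdy⟩
    rw [hd1] at haub
    have hlt : EMetric.infEdist y (F (x + t • u)) <
        ENNReal.ofReal (τ * (t * ‖u‖) + ε3 * t) := by
      refine lt_of_le_of_lt haub ?_
      rw [ENNReal.ofReal_lt_ofReal_iff (by positivity)]
      nlinarith [norm_nonneg u, mul_pos hε3 ht]
    obtain ⟨y', hy'F, hy'd⟩ := EMetric.infEdist_lt_iff.mp hlt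
    rw [edist_lt_ofReal] at hy'd
    have hpg : ((x + t • u, y') : X × Y) ∈ gph F := hy'F
    have hy'dist : ‖y' - y‖ ≤ τ * (t * ‖u‖) + ε3 * t := by
      rw [← dist_eq_norm, dist_comm]; exact hy'd.le
    have hpdist : dist ((x + t • u, y') : X × Y) (x, y) ≤ t * K := by
      rw [Prod.dist_eq, max_le_iff]
      constructor
      · rw [hd1]; nlinarith [norm_nonneg u]
      · rw [dist_eq_norm]
        have : τ * (t * ‖u‖) + ε3 * t ≤ t * K := by nlinarith [norm_nonneg u]
        linarith [hy'dist]
    have hpball : ((x + t • u, y') : X × Y) ∈ ball (x, y) δ1 :=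
      mem_ball.mpr (hpdist.trans_lt (htK.trans_lt (by linarith)))
    have hineq := hb ((x + t • u, y')) ⟨hpg, hpball⟩
    have hnorm : ‖((x + t • u, y') : X × Y) - (x, y)‖ ≤ t * K := by
      rw [← dist_eq_norm]; exact hpdist
    have happ : (xs.coprod ys) (((x + t • u, y') : X × Y) - (x, y))
        = t * xs u + ys (y' - y) := by
      simp [Prod.mk_sub_mk, ContinuousLinearMap.coprod_apply]
    have hys1 : ‖ys (y' - y)‖ ≤ ‖ys‖ * ‖y' - y‖ := ys.le_opNorm _
    rw [Real.norm_eq_abs, abs_le] at hys1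
    have hfin : t * xs u ≤ ε1 * (t * K) + ‖ys‖ * ‖y' - y‖ := by
      have h6 : ε1 * ‖((x + t • u, y') : X × Y) - (x, y)‖ ≤ ε1 * (t * K) :=
        mul_le_mul_of_nonneg_left hnorm hε1.le
      rw [happ] at hineq
      linarith [hys1.1]
    have hfin2 : t * xs u ≤ t * (ε1 * K + ‖ys‖ * (τ * ‖u‖ + ε3)) := by
      have hys0 : (0 : ℝ) ≤ ‖ys‖ := norm_nonneg ys
      nlinarith [hfin, hy'dist]
    have hdiv : xs u ≤ ε1 * K + ‖ys‖ * (τ * ‖u‖ + ε3) := (mul_le_mul_iff_right₀ ht).mp hfin2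
    have hεK : ε1 * K = ε / 2 := by rw [hε1_def]; field_simp
    have hysε3 : ‖ys‖ * ε3 ≤ ε / 2 := by
      have h7 : ‖ys‖ * ε3 ≤ c * (ε / (2 * c)) := by
        have := mul_le_mul hysc hε3le hε3.le hc.le
        linarith
      have h8 : c * (ε / (2 * c)) = ε / 2 := by field_simp
      linarith
    nlinarith [norm_nonneg u, norm_nonneg ys]
  have h0 : (0 : ℝ) ≤ τ * ‖ys‖ := by positivity
  refine xs.opNorm_le_bound h0 ?_
  intro u
  rw [Real.norm_eq_abs, abs_le]
  constructor
  · have := key (-u)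
    rw [map_neg, norm_neg] at this
    linarith
  · exact key u

end
end

section
/- Let X and Y be normed spaces, Ω ⊂ X, F : X ⇉ Y, Ξ a nonempty family of subsets of Y, x̄ ∈ Ω and ȳ ∈ F(x̄). The triple {F, Ω, Ξ} is extremal at (x̄,ȳ) if and only if there is a ρ ∈ (0,+∞] such that for any ε > 0 there exists an A ∈ Ξ with d(ȳ, A) < ε and F(Ω ∩ B_ρ(x̄)) ∩ A ∩ B_ρ(ȳ) = ∅. -/
open Set Filter Metric Topology Pointwise
open scoped ENNReal

noncomputable section

variable {X Y Z : Type*}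

theorem statement3 {X Y : Type*} [NormedAddCommGroup X] [NormedSpace ℝ X]
    [NormedAddCommGroup Y] [NormedSpace ℝ Y] (Ω : Set X) (F : X → Set Y)
    (Ξ : Set (Set Y)) (hΞ : Ξ.Nonempty) (xbar : X) (ybar : Y)
    (hx : xbar ∈ Ω) (hy : ybar ∈ F xbar) :
    pairExtremal (Xi1 F) (Xi2 Ω Ξ) (xbar, ybar) ↔
      ∃ ρ : ℝ≥0∞, 0 < ρ ∧ ∀ ε > (0:ℝ), ∃ A ∈ Ξ,
        EMetric.infEdist ybar A < ENNReal.ofReal ε ∧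
        (⋃ x ∈ Ω ∩ EMetric.ball xbar ρ, F x) ∩ A ∩ EMetric.ball ybar ρ = ∅ := by
  constructor
  · rintro ⟨ρ, hρ, h⟩
    refine ⟨ρ, hρ, fun ε hε => ?_⟩
    obtain ⟨A1, hA1, A2, hA2, h1, h2, hempty⟩ := h ε hε
    rw [Xi1, mem_singleton_iff] at hA1
    obtain ⟨A, hA, rfl⟩ := hA2
    subst hA1
    refine ⟨A, hA, ?_, ?_⟩
    · refine lt_of_le_of_lt ?_ h2
      refine EMetric.le_infEdist.2 fun b hb => ?_
      calc EMetric.infEdist ybar A ≤ edist ybar b.2 :=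
            EMetric.infEdist_le_edist_of_mem hb.2
        _ ≤ edist (xbar, ybar) b := by rw [Prod.edist_eq]; exact le_max_right _ _
    · rw [eq_empty_iff_forall_notMem]
      rintro y ⟨⟨hyU, hyA⟩, hyb⟩
      simp only [mem_iUnion] at hyU
      obtain ⟨x, ⟨hxΩ, hxb⟩, hyF⟩ := hyU
      have : (x, y) ∈ gph F ∩ Ω ×ˢ A ∩ EMetric.ball (xbar, ybar) ρ := by
        refine ⟨⟨hyF, hxΩ, hyA⟩, ?_⟩
        rw [show (x, y) ∈ EMetric.ball (xbar, ybar) ρ ↔ edist (x, y) (xbar, ybar) < ρ from EMetric.mem_ball, Prod.edist_eq]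
        exact max_lt hxb hyb
      rw [hempty] at this
      exact this
  · rintro ⟨ρ, hρ, h⟩
    refine ⟨ρ, hρ, fun ε hε => ?_⟩
    obtain ⟨A, hA, hd, hempty⟩ := h ε hε
    refine ⟨gph F, rfl, Ω ×ˢ A, ⟨A, hA, rfl⟩, ?_, ?_, ?_⟩
    · rw [show EMetric.infEdist (xbar, ybar) (gph F) = 0 from EMetric.infEdist_zero_of_mem (show (xbar, ybar) ∈ gph F from hy)]
      exact ENNReal.ofReal_pos.2 hε
    · obtain ⟨b, hb, hbd⟩ := EMetric.infEdist_lt_iff.1 hd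
      refine lt_of_le_of_lt (EMetric.infEdist_le_edist_of_mem (x := (xbar, ybar))
        (y := (xbar, b)) ⟨hx, hb⟩) ?_
      rw [Prod.edist_eq, edist_self]
      simpa using hbd
    · rw [eq_empty_iff_forall_notMem]
      rintro ⟨x, y⟩ ⟨⟨hgph, hxΩ, hyA⟩, hball⟩
      rw [show (x, y) ∈ EMetric.ball (xbar, ybar) ρ ↔ edist (x, y) (xbar, ybar) < ρ from EMetric.mem_ball, Prod.edist_eq, max_lt_iff] at hball
      have : y ∈ (⋃ x ∈ Ω ∩ EMetric.ball xbar ρ, F x) ∩ A ∩ EMetric.ball ybar ρ := by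
        refine ⟨⟨?_, hyA⟩, hball.2⟩
        exact mem_iUnion₂.2 ⟨x, ⟨hxΩ, hball.1⟩, hgph⟩
      rw [hempty] at this
      exact this

end
end

section
/- Let X and Y be normed spaces, Ω ⊂ X, F : X ⇉ Y, Ξ a nonempty family of subsets of Y, x̄ ∈ Ω and ȳ ∈ F(x̄). The triple {F, Ω, Ξ} is approximately stationary at (x̄,ȳ) if and only if for any ε > 0 there exist a ρ ∈ (0,ε), an A ∈ Ξ, and points (x₁,y₁), (x₂,y₂) ∈ B_ε(x̄,ȳ) such that d((x₁,y₁), gph F) < ερ, d(x₂, Ω) < ερ, d(y₂, A) < ερ, and F(x₁ + (Ω − x₂) ∩ (ρ𝔹_X)) ∩ (y₁ + (A − y₂) ∩ (ρ𝔹_Y)) = ∅. -/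
open Set Filter Metric Topology Pointwise
open scoped ENNReal

noncomputable section

variable {X Y Z : Type*}

lemma key_empty {X Y : Type*} [NormedAddCommGroup X] [NormedAddCommGroup Y]
    (F : X → Set Y) (Ω : Set X) (A : Set Y) (x1 x2 : X) (y1 y2 : Y) (ρ : ℝ) :
    ((fun a => a - ((x1 : X), (y1 : Y))) '' gph F) ∩
      ((fun a => a - (x2, y2)) '' (Ω ×ˢ A)) ∩ ball (0 : X × Y) ρ = ∅ ↔
    (⋃ x ∈ (fun u => x1 + u) '' (((fun u => u - x2) '' Ω) ∩ ball 0 ρ), F x) ∩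
      ((fun v => y1 + v) '' (((fun v => v - y2) '' A) ∩ ball 0 ρ)) = ∅ := by
  rw [Set.eq_empty_iff_forall_notMem, Set.eq_empty_iff_forall_notMem]
  constructor
  · intro h w hw
    obtain ⟨hw1, hw2⟩ := hw
    obtain ⟨v, ⟨⟨a, ha, rfl⟩, hv⟩, rfl⟩ := hw2
    rw [Set.mem_iUnion₂] at hw1
    obtain ⟨x, hxmem, hwF⟩ := hw1
    obtain ⟨u, ⟨⟨ω, hω, rfl⟩, hu⟩, rfl⟩ := hxmem
    refine h (ω - x2, a - y2) ⟨⟨⟨(x1 + (ω - x2), y1 + (a - y2)), hwF, ?_⟩,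
      ⟨(ω, a), ⟨hω, ha⟩, rfl⟩⟩, ?_⟩
    · simp [Prod.ext_iff]
    · rw [mem_ball_zero_iff, Prod.norm_def]
      rw [mem_ball_zero_iff] at hu hv
      exact max_lt hu hv
  · intro h p hp
    obtain ⟨⟨hp1, hp2⟩, hpball⟩ := hp
    obtain ⟨q, hq, rfl⟩ := hp1
    obtain ⟨⟨ω, a⟩, ⟨hω, ha⟩, heq⟩ := hp2
    simp only [Prod.ext_iff, Prod.fst_sub, Prod.snd_sub] at heq
    rw [mem_ball_zero_iff, Prod.norm_def, max_lt_iff] at hpball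
    obtain ⟨h1, h2⟩ := hpball
    refine h (y1 + (q - (x1, y1)).2) ⟨?_, ?_⟩
    · rw [Set.mem_iUnion₂]
      refine ⟨x1 + (q - (x1, y1)).1, ⟨(q - (x1, y1)).1,
        ⟨⟨ω, hω, heq.1⟩, mem_ball_zero_iff.mpr h1⟩, rfl⟩, ?_⟩
      have : (x1 + (q - (x1, y1)).1, y1 + (q - (x1, y1)).2) = q := by
        simp [Prod.ext_iff]
      rw [show x1 + (q - (x1, y1)).1 = q.1 by simp,
        show y1 + (q - (x1, y1)).2 = q.2 by simp]
      exact hq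
    · exact ⟨(q - (x1, y1)).2, ⟨⟨a, ha, heq.2⟩, mem_ball_zero_iff.mpr h2⟩, rfl⟩

theorem statement5 {X Y : Type*} [NormedAddCommGroup X] [NormedSpace ℝ X]
    [NormedAddCommGroup Y] [NormedSpace ℝ Y] (Ω : Set X) (F : X → Set Y)
    (Ξ : Set (Set Y)) (hΞ : Ξ.Nonempty) (xbar : X) (ybar : Y)
    (hx : xbar ∈ Ω) (hy : ybar ∈ F xbar) :
    pairApproxStationary (Xi1 F) (Xi2 Ω Ξ) (xbar, ybar) ↔
      ∀ ε > (0:ℝ), ∃ ρ : ℝ, 0 < ρ ∧ ρ < ε ∧ ∃ A ∈ Ξ, ∃ x1 y1 x2 y2,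
        (x1, y1) ∈ ball (xbar, ybar) ε ∧ (x2, y2) ∈ ball (xbar, ybar) ε ∧
        EMetric.infEdist (x1, y1) (gph F) < ENNReal.ofReal (ε * ρ) ∧
        EMetric.infEdist x2 Ω < ENNReal.ofReal (ε * ρ) ∧
        EMetric.infEdist y2 A < ENNReal.ofReal (ε * ρ) ∧
        (⋃ x ∈ (fun u => x1 + u) '' (((fun u => u - x2) '' Ω) ∩ ball 0 ρ), F x) ∩
          ((fun v => y1 + v) '' (((fun v => v - y2) '' A) ∩ ball 0 ρ)) = ∅ := by
  constructor
  · intro H ε hε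
    obtain ⟨ρ, hρ, hρε, A1, hA1, A2, hA2, z1, hz1, z2, hz2, hd1, hd2, hempty⟩ := H ε hε
    rw [Xi1, Set.mem_singleton_iff] at hA1
    obtain ⟨A, hA, rfl⟩ := hA2
    subst hA1
    refine ⟨ρ, hρ, hρε, A, hA, z1.1, z1.2, z2.1, z2.2, by simpa using hz1, by simpa using hz2,
      by simpa using hd1, ?_, ?_, ?_⟩
    · refine lt_of_le_of_lt ?_ hd2
      refine EMetric.le_infEdist.mpr fun q hq => ?_
      calc EMetric.infEdist z2.1 Ω ≤ edist z2.1 q.1 := EMetric.infEdist_le_edist_of_mem hq.1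
        _ ≤ edist z2 q := le_max_left _ _
    · refine lt_of_le_of_lt ?_ hd2
      refine EMetric.le_infEdist.mpr fun q hq => ?_
      calc EMetric.infEdist z2.2 A ≤ edist z2.2 q.2 := EMetric.infEdist_le_edist_of_mem hq.2
        _ ≤ edist z2 q := le_max_right _ _
    · rw [← key_empty F Ω A z1.1 z2.1 z1.2 z2.2 ρ]
      simpa using hempty
  · intro H ε hε
    obtain ⟨ρ, hρ, hρε, A, hA, x1, y1, x2, y2, hb1, hb2, hd1, hd2, hd3, hempty⟩ := H ε hε
    refine ⟨ρ, hρ, hρε, gph F, rfl, Ω ×ˢ A, ⟨A, hA, rfl⟩, (x1, y1), hb1, (x2, y2), hb2,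
      hd1, ?_, (key_empty F Ω A x1 x2 y1 y2 ρ).mpr hempty⟩
    change Metric.infEDist _ _ < _ at hd2 hd3 ⊢
    rw [EMetric.infEdist_lt_iff] at hd2 hd3 ⊢
    obtain ⟨ω, hω, hω'⟩ := hd2
    obtain ⟨a, ha, ha'⟩ := hd3
    exact ⟨(ω, a), ⟨hω, ha⟩, max_lt hω' ha'⟩

end
end

section
/- Let X and Y be Banach spaces, Ω ⊂ X, F : X ⇉ Y, Ξ a nonempty family of subsets of Y, x̄ ∈ Ω and ȳ ∈ F(x̄), and suppose the sets Ω, gph F and all members of Ξ are closed. If the triple {F, Ω, Ξ} is approximately stationary at (x̄,ȳ), then for any ε > 0 there exist (x₁,y₁) ∈ gph F ∩ B_ε(x̄,ȳ), x₂ ∈ Ω ∩ B_ε(x̄), A ∈ Ξ, y₂ ∈ A ∩ B_ε(ȳ), (x₁*,y₁*) ∈ N^C_{gph F}(x₁,y₁), x₂* ∈ N^C_Ω(x₂) and y₂* ∈ N^C_A(y₂) such that ‖x₁* + x₂*‖ + ‖y₁* + y₂*‖ < ε and (‖x₁*‖ + ‖y₁*‖) + (‖x₂*‖ + ‖y₂*‖)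 = 1. -/
open Set Filter Metric Topology Pointwise
open scoped ENNReal

noncomputable section

variable {X Y Z : Type*}

-- ===== auxiliary lemmas =====

theorem myEkeland {α : Type*} [MetricSpace α] [CompleteSpace α] (f : α → ℝ)
    (hf : Continuous f) (h0 : ∀ x, 0 ≤ f x) (x0 : α) (κ : ℝ) (hκ : 0 < κ) :
    ∃ v, f v + κ * dist v x0 ≤ f x0 ∧ ∀ u, f v ≤ f u + κ * dist u v := by
  classical
  set P : α → α → Prop := fun y x => f y + κ * dist y x ≤ f x with hP
  have hbdd : ∀ x : α, BddBelow (f '' {y | P y x}) :=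
    fun x => ⟨0, by rintro r ⟨y, _, rfl⟩; exact h0 y⟩
  have hne : ∀ x : α, (f '' {y | P y x}).Nonempty :=
    fun x => ⟨f x, ⟨x, by simp [hP], rfl⟩⟩
  have key : ∀ (x : α) (n : ℕ), ∃ y, P y x ∧ f y ≤ sInf (f '' {y | P y x}) + (1/2)^n := by
    intro x n
    obtain ⟨r, ⟨y, hy, rfl⟩, hr⟩ := Real.lt_sInf_add_pos (hne x) (by positivity :
      (0:ℝ) < (1/2)^n)
    exact ⟨y, hy, hr.le⟩
  set seq : ℕ → α := fun n => Nat.rec x0 (fun n x => Classical.choose (key x n)) n with hseq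
  have seq_succ : ∀ n, seq (n+1) = Classical.choose (key (seq n) n) := fun n => rfl
  have hstep : ∀ n, P (seq (n+1)) (seq n) ∧
      f (seq (n+1)) ≤ sInf (f '' {y | P y (seq n)}) + (1/2)^n := by
    intro n; rw [seq_succ]; exact Classical.choose_spec (key (seq n) n)
  have fmono : ∀ n, f (seq (n+1)) ≤ f (seq n) := by
    intro n
    have := (hstep n).1
    have hd : 0 ≤ κ * dist (seq (n+1)) (seq n) := by positivity
    simp only [hP] at this; linarith
  have fanti : Antitone (fun n => f (seq n)) :=
    antitone_nat_of_succ_le fmono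
  have hQ : ∀ n m, n ≤ m → κ * dist (seq m) (seq n) ≤ f (seq n) - f (seq m) := by
    intro n m hnm
    induction m with
    | zero => simp [Nat.le_zero.mp hnm]
    | succ m ih =>
      rcases Nat.lt_or_ge n (m+1) with h | h
      · have hnm' : n ≤ m := Nat.lt_succ_iff.mp h
        have h1 := ih hnm'
        have h2 := (hstep m).1
        simp only [hP] at h2
        have htri : dist (seq (m+1)) (seq n) ≤ dist (seq (m+1)) (seq m) + dist (seq m) (seq n) :=
          dist_triangle _ _ _
        nlinarith [dist_nonneg (x := seq (m+1)) (y := seq m), hκ]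
      · have : n = m + 1 := le_antisymm hnm h
        simp [this]
  -- limit of f (seq n)
  have hbdd2 : BddBelow (Set.range fun n => f (seq n)) := ⟨0, by rintro r ⟨n, rfl⟩; exact h0 _⟩
  set l : ℝ := ⨅ n, f (seq n) with hl
  have hfl : Tendsto (fun n => f (seq n)) atTop (𝓝 l) :=
    tendsto_atTop_ciInf fanti hbdd2
  have hlle : ∀ n, l ≤ f (seq n) := fun n => ciInf_le hbdd2 n
  have hcauchy : CauchySeq seq := by
    apply cauchySeq_of_le_tendsto_0 (fun N => (f (seq N) - l)/κ)
    · intro n m N hn hm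
      rcases le_total n m with h | h
      · have := hQ n m h
        have h2 : f (seq n) ≤ f (seq N) := fanti hn
        have h3 := hlle m
        rw [dist_comm, le_div_iff₀ hκ]
        nlinarith
      · have := hQ m n h
        have h2 : f (seq m) ≤ f (seq N) := fanti hm
        have h3 := hlle n
        rw [le_div_iff₀ hκ]
        nlinarith
    · have : Tendsto (fun N => (f (seq N) - l)) atTop (𝓝 (l - l)) := hfl.sub tendsto_const_nhds
      simpa using this.div_const κ
  obtain ⟨v, hv⟩ := cauchySeq_tendsto_of_complete hcauchy
  have hfv : Tendsto (fun n => f (seq n)) atTop (𝓝 (f v)) := (hf.tendsto v).comp hv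
  have hlfv : l = f v := tendsto_nhds_unique hfl hfv
  have claimA : ∀ n, f v + κ * dist v (seq n) ≤ f (seq n) := by
    intro n
    have hten : Tendsto (fun m => f (seq m) + κ * dist (seq m) (seq n)) atTop
        (𝓝 (f v + κ * dist v (seq n))) :=
      hfv.add ((((continuous_id.dist continuous_const).tendsto v).comp hv).const_mul κ)
    refine le_of_tendsto hten ?_
    filter_upwards [eventually_ge_atTop n] with m hm
    have := hQ n m hm
    linarith
  refine ⟨v, ?_, ?_⟩
  · have := claimA 0
    exact this
  · intro u
    by_contra hcon
    push_neg at hcon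
    have hPu : ∀ n, P u (seq n) := by
      intro n
      have h1 := claimA n
      have htri : dist u (seq n) ≤ dist u v + dist v (seq n) := dist_triangle _ _ _
      simp only [hP]
      nlinarith [hκ]
    have hfu : ∀ n, f (seq (n+1)) ≤ f u + (1/2)^n := by
      intro n
      have h1 := (hstep n).2
      have h2 : sInf (f '' {y | P y (seq n)}) ≤ f u :=
        csInf_le (hbdd _) ⟨u, hPu n, rfl⟩
      linarith
    have hfvu : f v ≤ f u := by
      have h1 : Tendsto (fun n => f (seq (n+1))) atTop (𝓝 (f v)) :=
        hfv.comp (tendsto_add_atTop_nat 1)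
      have h2 : Tendsto (fun n : ℕ => f u + (1/2:ℝ)^n) atTop (𝓝 (f u + 0)) :=
        tendsto_const_nhds.add (tendsto_pow_atTop_nhds_zero_of_lt_one (by norm_num) (by norm_num))
      have := le_of_tendsto_of_tendsto' h1 (by simpa using h2) hfu
      simpa using this
    nlinarith [dist_nonneg (x := u) (y := v), hκ]

section TC
variable [NormedAddCommGroup X] [NormedSpace ℝ X] [NormedAddCommGroup Y] [NormedSpace ℝ Y]

theorem zero_mem_ctc (Ω : Set X) (x : X) : (0:X) ∈ clarkeTangentCone Ω x := by
  intro x hx hxt t ht htt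
  exact ⟨fun _ => 0, tendsto_const_nhds, fun k => by simpa using hx k⟩

theorem add_mem_ctc {Ω : Set X} {x : X} {a b : X} (ha : a ∈ clarkeTangentCone Ω x)
    (hb : b ∈ clarkeTangentCone Ω x) : a + b ∈ clarkeTangentCone Ω x := by
  intro xs hxs hxt t ht htt
  obtain ⟨z1, hz1, hz1m⟩ := ha xs hxs hxt t ht htt
  have hxs2 : Tendsto (fun k => xs k + t k • z1 k) atTop (𝓝 x) := by
    have : Tendsto (fun k => t k • z1 k) atTop (𝓝 ((0:ℝ) • a)) := htt.smul hz1
    simpa using hxt.add this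
  obtain ⟨z2, hz2, hz2m⟩ := hb (fun k => xs k + t k • z1 k) hz1m hxs2 t ht htt
  refine ⟨fun k => z1 k + z2 k, hz1.add hz2, fun k => ?_⟩
  have := hz2m k
  simpa [smul_add, add_assoc] using this

theorem smul_mem_ctc {Ω : Set X} {x : X} {a : X} {c : ℝ} (hc : 0 < c)
    (ha : a ∈ clarkeTangentCone Ω x) : c • a ∈ clarkeTangentCone Ω x := by
  intro xs hxs hxt t ht htt
  obtain ⟨z1, hz1, hz1m⟩ := ha xs hxs hxt (fun k => c * t k) (fun k => mul_pos hc (ht k))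
    (by simpa using htt.const_mul c)
  refine ⟨fun k => c • z1 k, hz1.const_smul c, fun k => ?_⟩
  have := hz1m k
  rw [smul_smul]
  convert this using 3
  ring

theorem prod_mem_ctc {Ω : Set X} {A : Set Y} {x : X} {y : Y} {a : X} {b : Y}
    (ha : a ∈ clarkeTangentCone Ω x) (hb : b ∈ clarkeTangentCone A y) :
    (a, b) ∈ clarkeTangentCone (Ω ×ˢ A) (x, y) := by
  intro xs hxs hxt t ht htt
  obtain ⟨z1, hz1, hz1m⟩ := ha (fun k => (xs k).1) (fun k => (hxs k).1)
    ((continuous_fst.tendsto _).comp hxt) t ht htt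
  obtain ⟨z2, hz2, hz2m⟩ := hb (fun k => (xs k).2) (fun k => (hxs k).2)
    ((continuous_snd.tendsto _).comp hxt) t ht htt
  exact ⟨fun k => (z1 k, z2 k), hz1.prodMk_nhds hz2, fun k => ⟨hz1m k, hz2m k⟩⟩

end TC


section Dsec
variable {Z' : Type*} [NormedAddCommGroup Z'] [NormedSpace ℝ Z']
/-- difference quotient of the norm at `u` in direction `h` -/
noncomputable def DQ (u h : Z') (s : ℝ) : ℝ := (‖u + s • h‖ - ‖u‖)/s

/-- lower directional derivative of the norm at `u` -/
noncomputable def Dlow (u h : Z') : ℝ := sInf (DQ u h '' Ioi 0)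

theorem neg_norm_le_DQ (u h : Z') {s : ℝ} (hs : 0 < s) : -‖h‖ ≤ DQ u h s := by
  have h1 : ‖u‖ - s * ‖h‖ ≤ ‖u + s • h‖ := by
    have h3 : ‖u‖ ≤ ‖u + s • h‖ + ‖s • h‖ := by
      calc ‖u‖ = ‖(u + s • h) + (-(s • h))‖ := by rw [add_neg_cancel_right]
      _ ≤ ‖u + s • h‖ + ‖-(s • h)‖ := norm_add_le _ _
      _ = ‖u + s • h‖ + ‖s • h‖ := by rw [norm_neg]
    have h2 : ‖s • h‖ = s * ‖h‖ := by rw [norm_smul, Real.norm_of_nonneg hs.le]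
    linarith
  rw [DQ, le_div_iff₀ hs]; nlinarith

theorem DQ_bddBelow (u h : Z') : BddBelow (DQ u h '' Ioi 0) :=
  ⟨-‖h‖, by rintro r ⟨s, hs, rfl⟩; exact neg_norm_le_DQ u h hs⟩

theorem DQ_nonempty (u h : Z') : (DQ u h '' Ioi 0).Nonempty := ⟨DQ u h 1, 1, by norm_num, rfl⟩

theorem Dlow_le_DQ (u h : Z') {s : ℝ} (hs : 0 < s) : Dlow u h ≤ DQ u h s :=
  csInf_le (DQ_bddBelow u h) ⟨s, hs, rfl⟩

theorem neg_norm_le_Dlow (u h : Z') : -‖h‖ ≤ Dlow u h :=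
  le_csInf (DQ_nonempty u h) (by rintro r ⟨s, hs, rfl⟩; exact neg_norm_le_DQ u h hs)

theorem Dlow_le_norm (u h : Z') : Dlow u h ≤ ‖h‖ := by
  refine (Dlow_le_DQ u h one_pos).trans ?_
  rw [DQ]
  simp only [one_smul, div_one]
  have := norm_add_le u h
  linarith

theorem abs_Dlow_le (u h : Z') : |Dlow u h| ≤ ‖h‖ :=
  abs_le.mpr ⟨by linarith [neg_norm_le_Dlow u h], Dlow_le_norm u h⟩

theorem DQ_mono (u h : Z') {s s' : ℝ} (hs : 0 < s) (hss' : s ≤ s') : DQ u h s ≤ DQ u h s' := by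
  have hs' : 0 < s' := hs.trans_le hss'
  have key : ‖u + s • h‖ ≤ (1 - s/s') * ‖u‖ + (s/s') * ‖u + s' • h‖ := by
    have hc1 : 0 ≤ 1 - s/s' := by
      rw [sub_nonneg, div_le_one hs']; exact hss'
    have hc2 : (0:ℝ) < s/s' := by positivity
    have heq : u + s • h = (1 - s/s') • u + (s/s') • (u + s' • h) := by
      rw [smul_add, smul_smul]
      rw [div_mul_cancel₀ _ hs'.ne']
      module
    calc ‖u + s • h‖ = ‖(1 - s/s') • u + (s/s') • (u + s' • h)‖ := by rw [heq]
    _ ≤ ‖(1 - s/s') • u‖ + ‖(s/s') • (u + s' • h)‖ := norm_add_le _ _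
    _ = (1 - s/s') * ‖u‖ + (s/s') * ‖u + s' • h‖ := by
        rw [norm_smul, norm_smul, Real.norm_of_nonneg hc1, Real.norm_of_nonneg hc2.le]
  rw [DQ, DQ, div_le_div_iff₀ hs hs']
  have : s / s' * s' = s := div_mul_cancel₀ _ hs'.ne'
  have expand : ((1 - s/s')*‖u‖ + s/s'*‖u + s' • h‖) * s' = (s'-s)*‖u‖ + s*‖u + s' • h‖ := by
    field_simp
  have key2 := (mul_le_mul_of_nonneg_right key hs'.le).trans_eq expand
  linarith


theorem Dlow_smul_le (u : Z') {c : ℝ} (hc : 0 < c) (h : Z') : Dlow u (c • h) ≤ c * Dlow u h := by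
  have key : ∀ s : ℝ, 0 < s → Dlow u (c • h) ≤ c * DQ u h s := by
    intro s hs
    have h1 : DQ u (c • h) (s/c) = c * DQ u h s := by
      rw [DQ, DQ, smul_smul, div_mul_cancel₀ _ hc.ne']
      field_simp
    rw [← h1]
    exact Dlow_le_DQ u (c • h) (by positivity)
  rw [mul_comm, ← div_le_iff₀ hc]
  refine le_csInf (DQ_nonempty u h) ?_
  rintro r ⟨s, hs, rfl⟩
  rw [div_le_iff₀ hc, mul_comm]
  exact key s hs

theorem Dlow_smul (u : Z') {c : ℝ} (hc : 0 < c) (h : Z') : Dlow u (c • h) = c * Dlow u h := by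
  refine le_antisymm (Dlow_smul_le u hc h) ?_
  have := Dlow_smul_le u (inv_pos.mpr hc) (c • h)
  rw [inv_smul_smul₀ hc.ne'] at this
  rw [← mul_le_mul_iff_right₀ (inv_pos.mpr hc), inv_mul_cancel_left₀ hc.ne']
  linarith

theorem DQ_add_le (u h1 h2 : Z') {s : ℝ} (hs : 0 < s) :
    DQ u (h1 + h2) s ≤ DQ u h1 (2*s) + DQ u h2 (2*s) := by
  have key : ‖u + s • (h1 + h2)‖ ≤ (1/2) * ‖u + (2*s) • h1‖ + (1/2) * ‖u + (2*s) • h2‖ := by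
    have heq : u + s • (h1 + h2) = ((1:ℝ)/2) • (u + (2*s) • h1) + ((1:ℝ)/2) • (u + (2*s) • h2) := by
      module
    calc ‖u + s • (h1 + h2)‖ = ‖((1:ℝ)/2) • (u + (2*s) • h1) + ((1:ℝ)/2) • (u + (2*s) • h2)‖ := by
          rw [heq]
    _ ≤ ‖((1:ℝ)/2) • (u + (2*s) • h1)‖ + ‖((1:ℝ)/2) • (u + (2*s) • h2)‖ := norm_add_le _ _
    _ = (1/2) * ‖u + (2*s) • h1‖ + (1/2) * ‖u + (2*s) • h2‖ := by
        rw [norm_smul, norm_smul]; norm_num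
  rw [DQ, DQ, DQ]
  rw [div_add_div _ _ (by positivity : (2*s:ℝ) ≠ 0) (by positivity : (2*s:ℝ) ≠ 0),
    div_le_div_iff₀ hs (by positivity)]
  nlinarith

theorem Dlow_add_le (u h1 h2 : Z') : Dlow u (h1 + h2) ≤ Dlow u h1 + Dlow u h2 := by
  refine le_of_forall_pos_le_add ?_
  intro δ hδ
  obtain ⟨r1, ⟨s1, hs1, rfl⟩, hr1⟩ := Real.lt_sInf_add_pos (DQ_nonempty u h1) (half_pos hδ)
  obtain ⟨r2, ⟨s2, hs2, rfl⟩, hr2⟩ := Real.lt_sInf_add_pos (DQ_nonempty u h2) (half_pos hδ)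
  set s := min s1 s2 with hsdef
  have hs : 0 < s := lt_min hs1 hs2
  have h1' : DQ u h1 s ≤ DQ u h1 s1 := DQ_mono u h1 hs (min_le_left _ _)
  have h2' : DQ u h2 s ≤ DQ u h2 s2 := DQ_mono u h2 hs (min_le_right _ _)
  have hstep : DQ u (h1 + h2) (s/2) ≤ DQ u h1 s + DQ u h2 s := by
    have := DQ_add_le u h1 h2 (by positivity : (0:ℝ) < s/2)
    rwa [mul_div_cancel₀ _ (two_ne_zero)] at this
  have := Dlow_le_DQ u (h1 + h2) (by positivity : (0:ℝ) < s/2)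
  have e1 : Dlow u h1 = sInf (DQ u h1 '' Ioi 0) := rfl
  have e2 : Dlow u h2 = sInf (DQ u h2 '' Ioi 0) := rfl
  rw [← e1] at hr1
  rw [← e2] at hr2
  linarith

theorem DQ_continuous (u : Z') {s : ℝ} (hs : 0 < s) : Continuous (fun h : Z' => DQ u h s) := by
  unfold DQ
  exact ((continuous_norm.comp (continuous_const.add (continuous_id.const_smul s))).sub
    continuous_const).div_const s

end Dsec

theorem sandwich_lemma {W : Type*} [AddCommGroup W] [Module ℝ W] (φ : W → ℝ) (T : Set W)
    (hT0 : (0:W) ∈ T) (hTadd : ∀ a ∈ T, ∀ b ∈ T, a + b ∈ T)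
    (hTsmul : ∀ c : ℝ, 0 < c → ∀ a ∈ T, c • a ∈ T)
    (hφ0 : φ 0 = 0) (hφadd : ∀ x y, φ (x + y) ≤ φ x + φ y)
    (hφsmul : ∀ c : ℝ, 0 < c → ∀ x, φ (c • x) = c * φ x)
    (hφT : ∀ t ∈ T, 0 ≤ φ t) (d : W) (hd : d ≠ 0) :
    ∃ g : W →ₗ[ℝ] ℝ, (∀ x, g x ≤ φ x) ∧ (∀ t ∈ T, 0 ≤ g t) ∧ -φ (-d) ≤ g d := by
  classical
  set S : W → Set ℝ := fun x => (fun t => φ (x + t)) '' T with hS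
  have hSne : ∀ x, (S x).Nonempty := fun x => ⟨φ x, 0, hT0, by simp⟩
  have hSlb : ∀ x, ∀ r ∈ S x, -φ (-x) ≤ r := by
    rintro x r ⟨t, ht, rfl⟩
    have h1 : φ t ≤ φ (x + t) + φ (-x) := by
      have := hφadd (x + t) (-x)
      simpa [add_comm, add_assoc, add_left_comm] using this
    have h2 := hφT t ht
    linarith
  have hSbdd : ∀ x, BddBelow (S x) := fun x => ⟨-φ (-x), fun r hr => hSlb x r hr⟩
  set N : W → ℝ := fun x => sInf (S x) with hN
  have hNle : ∀ x, ∀ t ∈ T, N x ≤ φ (x + t) := fun x t ht => csInf_le (hSbdd x) ⟨t, ht, rfl⟩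
  have hNleφ : ∀ x, N x ≤ φ x := fun x => by simpa using hNle x 0 hT0
  have hNlb : ∀ x, -φ (-x) ≤ N x := fun x => le_csInf (hSne x) (hSlb x)
  have hN0 : N 0 = 0 := le_antisymm (by simpa [hφ0] using hNleφ 0) (by simpa [hφ0] using hNlb 0)
  have hNadd : ∀ x y, N (x + y) ≤ N x + N y := by
    intro x y
    refine le_of_forall_pos_le_add ?_
    intro δ hδ
    obtain ⟨r1, ⟨t1, ht1, rfl⟩, hr1⟩ := Real.lt_sInf_add_pos (hSne x) (half_pos hδ)
    obtain ⟨r2, ⟨t2, ht2, rfl⟩, hr2⟩ := Real.lt_sInf_add_pos (hSne y) (half_pos hδ)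
    have h1 : N (x + y) ≤ φ ((x + y) + (t1 + t2)) := hNle _ _ (hTadd t1 ht1 t2 ht2)
    have h2 : φ ((x + y) + (t1 + t2)) ≤ φ (x + t1) + φ (y + t2) := by
      have := hφadd (x + t1) (y + t2)
      have heq : (x + t1) + (y + t2) = (x + y) + (t1 + t2) := by abel
      rwa [heq] at this
    have e1 : N x = sInf (S x) := rfl
    have e2 : N y = sInf (S y) := rfl
    rw [← e1] at hr1; rw [← e2] at hr2
    linarith
  have hNsmul_le : ∀ c : ℝ, 0 < c → ∀ x, N (c • x) ≤ c * N x := by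
    intro c hc x
    refine le_of_forall_pos_le_add ?_
    intro δ hδ
    obtain ⟨r1, ⟨t1, ht1, rfl⟩, hr1⟩ := Real.lt_sInf_add_pos (hSne x) (div_pos hδ hc)
    have h1 : N (c • x) ≤ φ (c • x + c • t1) := hNle _ _ (hTsmul c hc t1 ht1)
    have h2 : φ (c • x + c • t1) = c * φ (x + t1) := by rw [← smul_add, hφsmul c hc]
    have e1 : N x = sInf (S x) := rfl
    rw [← e1] at hr1
    have h3 : c * φ (x + t1) ≤ c * (N x + δ / c) := by
      apply mul_le_mul_of_nonneg_left (le_of_lt hr1) hc.le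
    have h4 : c * (N x + δ / c) = c * N x + δ := by field_simp
    linarith
  have hNsmul : ∀ c : ℝ, 0 < c → ∀ x, N (c • x) = c * N x := by
    intro c hc x
    refine le_antisymm (hNsmul_le c hc x) ?_
    have := hNsmul_le c⁻¹ (inv_pos.mpr hc) (c • x)
    rw [inv_smul_smul₀ hc.ne'] at this
    have := mul_le_mul_of_nonneg_left this hc.le
    rw [mul_inv_cancel_left₀ hc.ne'] at this
    linarith
  have hNd : 0 ≤ N d + N (-d) := by
    have := hNadd d (-d)
    simp only [add_neg_cancel, hN0] at this
    linarith
  have H : ∀ c : ℝ, c • d = 0 → c • N d = (0:ℝ) := by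
    intro c hc
    rcases smul_eq_zero.mp hc with h | h
    · simp [h]
    · exact absurd h hd
  set f : W →ₗ.[ℝ] ℝ := LinearPMap.mkSpanSingleton' d (N d) H with hf
  have hfdom : f.domain = Submodule.span ℝ {d} := LinearPMap.domain_mkSpanSingleton d (N d) H
  have hfle : ∀ x : f.domain, f x ≤ N x := by
    rintro ⟨xv, hxv⟩
    have hxv' : xv ∈ Submodule.span ℝ {d} := hfdom ▸ hxv
    obtain ⟨c, hc⟩ := Submodule.mem_span_singleton.mp hxv'
    have hv : xv = c • d := hc.symm
    subst hv
    have happ : f ⟨c • d, hxv⟩ = c • N d := LinearPMap.mkSpanSingleton'_apply d (N d) H c hxv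
    rw [happ]
    simp only [smul_eq_mul]
    rcases lt_trichotomy c 0 with h | h | h
    · have h1 : N (c • d) = (-c) * N (-d) := by
        have : c • d = (-c) • (-d) := by module
        rw [this, hNsmul (-c) (by linarith) (-d)]
      nlinarith
    · simp [h, hN0]
    · rw [hNsmul c h d]
  obtain ⟨g, hg1, hg2⟩ := exists_extension_of_le_sublinear f N hNsmul hNadd hfle
  have hdmem : d ∈ f.domain := by
    rw [hfdom]
    exact Submodule.mem_span_singleton_self d
  refine ⟨g, fun x => (hg2 x).trans (hNleφ x), ?_, ?_⟩
  · intro t ht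
    have h1 : g (-t) ≤ N (-t) := hg2 (-t)
    have h2 : N (-t) ≤ φ (-t + t) := hNle (-t) t ht
    simp only [neg_add_cancel, hφ0] at h2
    have h3 : g (-t) = -g t := map_neg g t
    linarith
  · have h1 := hg1 ⟨d, hdmem⟩
    have h2 : f ⟨d, hdmem⟩ = N d := LinearPMap.mkSpanSingleton'_apply_self d (N d) H hdmem
    rw [h2] at h1
    exact le_of_le_of_eq (hNlb d) h1.symm


set_option maxHeartbeats 0 in
theorem statement6 {X Y : Type*} [NormedAddCommGroup X] [NormedSpace ℝ X] [CompleteSpace X]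
    [NormedAddCommGroup Y] [NormedSpace ℝ Y] [CompleteSpace Y]
    (Ω : Set X) (F : X → Set Y) (Ξ : Set (Set Y)) (hΞ : Ξ.Nonempty)
    (xbar : X) (ybar : Y) (hx : xbar ∈ Ω) (hy : ybar ∈ F xbar)
    (hΩcl : IsClosed Ω) (hFcl : IsClosed (gph F)) (hΞcl : ∀ A ∈ Ξ, IsClosed A)
    (hstat : pairApproxStationary (Xi1 F) (Xi2 Ω Ξ) (xbar, ybar)) :
    ∀ ε > (0:ℝ), ∃ x1 y1, (x1, y1) ∈ gph F ∩ ball (xbar, ybar) ε ∧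
      ∃ x2 ∈ Ω ∩ ball xbar ε, ∃ A ∈ Ξ, ∃ y2 ∈ A ∩ ball ybar ε,
      ∃ (x1s : X →L[ℝ] ℝ) (y1s : Y →L[ℝ] ℝ) (x2s : X →L[ℝ] ℝ) (y2s : Y →L[ℝ] ℝ),
        x1s.coprod y1s ∈ clarkeNormalCone (gph F) (x1, y1) ∧
        x2s ∈ clarkeNormalCone Ω x2 ∧ y2s ∈ clarkeNormalCone A y2 ∧
        ‖x1s + x2s‖ + ‖y1s + y2s‖ < ε ∧
        (‖x1s‖ + ‖y1s‖) + (‖x2s‖ + ‖y2s‖) = 1 := by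
  intro ε0 hε0
  set ε := min (ε0/17) (1/9) with hεdef
  have hε : 0 < ε := lt_min (by linarith) (by norm_num)
  have hε9 : ε ≤ 1/9 := min_le_right _ _
  have hε17 : ε ≤ ε0/17 := min_le_left _ _
  obtain ⟨ρ, hρ0, hρε, A1, hA1, A2, hA2, z1, hz1b, z2, hz2b, hd1, hd2, hempty⟩ := hstat ε hε
  simp only [Xi1, mem_singleton_iff] at hA1
  obtain ⟨A, hAΞ, hA2eq⟩ := hA2
  obtain ⟨w1, hw1A, hw1d⟩ := EMetric.infEdist_lt_iff.mp hd1
  obtain ⟨w2, hw2A, hw2d⟩ := EMetric.infEdist_lt_iff.mp hd2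
  rw [edist_lt_ofReal] at hw1d hw2d
  have hA1cl : IsClosed A1 := hA1 ▸ hFcl
  have hA2cl : IsClosed A2 := hA2eq ▸ (hΩcl.prod (hΞcl A hAΞ))
  have hScl : IsClosed (A1 ×ˢ A2) := hA1cl.prod hA2cl
  haveI : CompleteSpace ↥(A1 ×ˢ A2) := hScl.completeSpace_coe
  set f : ↥(A1 ×ˢ A2) → ℝ := fun p => ‖(p.val.1 - z1) - (p.val.2 - z2)‖ with hfdef
  have hfc : Continuous f := (((continuous_subtype_val.fst).sub continuous_const).sub
    ((continuous_subtype_val.snd).sub continuous_const)).norm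
  have hf0 : ∀ p, 0 ≤ f p := fun p => norm_nonneg _
  have hx0mem : (w1, w2) ∈ A1 ×ˢ A2 := ⟨hw1A, hw2A⟩
  obtain ⟨v, hEk1, hEk2⟩ := myEkeland f hfc hf0 ⟨(w1,w2), hx0mem⟩ (4*ε) (by positivity)
  set v1 := v.val.1 with hv1def
  set v2 := v.val.2 with hv2def
  have hv1A : v1 ∈ A1 := v.2.1
  have hv2A : v2 ∈ A2 := v.2.2
  have hfx0 : f ⟨(w1,w2), hx0mem⟩ < 2*(ε*ρ) := by
    have h1 : ‖(w1 - z1) - (w2 - z2)‖ ≤ ‖w1 - z1‖ + ‖w2 - z2‖ := norm_sub_le _ _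
    have h2 : ‖w1 - z1‖ = dist z1 w1 := by rw [dist_comm, dist_eq_norm]
    have h3 : ‖w2 - z2‖ = dist z2 w2 := by rw [dist_comm, dist_eq_norm]
    have h4 : f ⟨(w1,w2), hx0mem⟩ = ‖(w1 - z1) - (w2 - z2)‖ := rfl
    rw [h4]; rw [h2, h3] at h1; linarith
  have hdvx0 : dist v ⟨(w1,w2), hx0mem⟩ ≤ ρ/2 := by
    have h1 := hf0 v
    have h2 : (4*ε) * dist v ⟨(w1,w2), hx0mem⟩ ≤ f ⟨(w1,w2), hx0mem⟩ := by linarith [hEk1]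
    nlinarith [hfx0, hε]
  have hdv1w1 : dist v1 w1 ≤ ρ/2 := by
    rw [Subtype.dist_eq, Prod.dist_eq] at hdvx0
    exact le_trans (le_max_left _ _) hdvx0
  have hdv2w2 : dist v2 w2 ≤ ρ/2 := by
    rw [Subtype.dist_eq, Prod.dist_eq] at hdvx0
    exact le_trans (le_max_right _ _) hdvx0
  have hv1z1 : dist v1 z1 < ρ := by
    have := dist_triangle v1 w1 z1
    have hw : dist w1 z1 < ε*ρ := by rwa [dist_comm] at hw1d
    nlinarith [hρ0]
  have hv2z2 : dist v2 z2 < ρ := by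
    have := dist_triangle v2 w2 z2
    have hw : dist w2 z2 < ε*ρ := by rwa [dist_comm] at hw2d
    nlinarith [hρ0]
  set u0 : X × Y := (v1 - z1) - (v2 - z2) with hu0def
  have hu0 : u0 ≠ 0 := by
    intro h
    have heq : (fun a => a - z2) v2 = v1 - z1 := (sub_eq_zero.mp h).symm
    have hkey : v1 - z1 ∈ ((fun a => a - z1) '' A1) ∩ ((fun a => a - z2) '' A2) ∩ ball 0 ρ := by
      refine ⟨⟨⟨v1, hv1A, rfl⟩, ⟨v2, hv2A, heq⟩⟩, ?_⟩
      rw [mem_ball, dist_zero_right, ← dist_eq_norm]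
      exact hv1z1
    rw [hempty] at hkey
    exact hkey
  have hnu0 : 0 < ‖u0‖ := norm_pos_iff.mpr hu0
  -- Ekeland minimality in explicit form
  have hmin : ∀ p1 ∈ A1, ∀ p2 ∈ A2,
      ‖u0‖ ≤ ‖(p1 - z1) - (p2 - z2)‖ + 4*ε*(dist p1 v1 + dist p2 v2) := by
    intro p1 hp1 p2 hp2
    have h1 := hEk2 ⟨(p1,p2), ⟨hp1,hp2⟩⟩
    rw [Subtype.dist_eq, Prod.dist_eq] at h1
    have h2 : f v = ‖u0‖ := rfl
    have h3 : f ⟨(p1,p2), ⟨hp1,hp2⟩⟩ = ‖(p1 - z1) - (p2 - z2)‖ := rfl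
    have h4 : max (dist p1 v1) (dist p2 v2) ≤ dist p1 v1 + dist p2 v2 :=
      max_le (le_add_of_nonneg_right dist_nonneg) (le_add_of_nonneg_left dist_nonneg)
    have h5 : (4*ε) * max (dist p1 v1) (dist p2 v2) ≤ (4*ε) * (dist p1 v1 + dist p2 v2) :=
      mul_le_mul_of_nonneg_left h4 (by positivity)
    rw [h2, h3] at h1
    linarith
  -- key tangent inequality
  have hkey : ∀ t1 ∈ clarkeTangentCone A1 v1, ∀ t2 ∈ clarkeTangentCone A2 v2,
      ∀ s : ℝ, 0 < s → -(4*ε*(‖t1‖ + ‖t2‖)) ≤ DQ u0 (t1 - t2) s := by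
    intro t1 ht1 t2 ht2 s hs
    have htk : ∀ k : ℕ, 0 < s/((k:ℝ)+1) := fun k => by positivity
    have htt : Tendsto (fun k : ℕ => s/((k:ℝ)+1)) atTop (𝓝 0) := by
      have h1 : Tendsto (fun k : ℕ => s * (1/((k:ℝ)+1))) atTop (𝓝 (s * 0)) :=
        tendsto_one_div_add_atTop_nhds_zero_nat.const_mul s
      simpa [mul_one_div, div_eq_mul_inv] using h1
    obtain ⟨zs1, hzs1, hzs1m⟩ := ht1 (fun _ => v1) (fun _ => hv1A) tendsto_const_nhds _ htk htt
    obtain ⟨zs2, hzs2, hzs2m⟩ := ht2 (fun _ => v2) (fun _ => hv2A) tendsto_const_nhds _ htk htt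
    have hstep : ∀ k : ℕ, -(4*ε*(‖zs1 k‖ + ‖zs2 k‖)) ≤ DQ u0 (zs1 k - zs2 k) s := by
      intro k
      set c : ℝ := s/((k:ℝ)+1) with hcdef
      have hc : 0 < c := htk k
      have hcs : c ≤ s := by
        rw [hcdef]
        apply div_le_self hs.le
        have : (0:ℝ) ≤ (k:ℝ) := Nat.cast_nonneg k
        linarith
      have h1 := hmin (v1 + c • zs1 k) (hzs1m k) (v2 + c • zs2 k) (hzs2m k)
      have h2 : (v1 + c • zs1 k - z1) - (v2 + c • zs2 k - z2) = u0 + c • (zs1 k - zs2 k) := by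
        rw [hu0def]; module
      have h3 : dist (v1 + c • zs1 k) v1 = c * ‖zs1 k‖ := by
        rw [dist_eq_norm, add_sub_cancel_left, norm_smul, Real.norm_of_nonneg hc.le]
      have h4 : dist (v2 + c • zs2 k) v2 = c * ‖zs2 k‖ := by
        rw [dist_eq_norm, add_sub_cancel_left, norm_smul, Real.norm_of_nonneg hc.le]
      rw [h2, h3, h4] at h1
      have h5 : -(4*ε*(‖zs1 k‖ + ‖zs2 k‖)) ≤ DQ u0 (zs1 k - zs2 k) c := by
        rw [DQ, le_div_iff₀ hc]
        nlinarith
      exact h5.trans (DQ_mono u0 _ hc hcs)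
    have hL : Tendsto (fun k => DQ u0 (zs1 k - zs2 k) s) atTop (𝓝 (DQ u0 (t1 - t2) s)) :=
      ((DQ_continuous u0 hs).tendsto _).comp (hzs1.sub hzs2)
    have hR : Tendsto (fun k => -(4*ε*(‖zs1 k‖ + ‖zs2 k‖))) atTop
        (𝓝 (-(4*ε*(‖t1‖ + ‖t2‖)))) :=
      (((hzs1.norm).add (hzs2.norm)).const_mul (4*ε)).neg
    exact le_of_tendsto_of_tendsto' hR hL hstep
  -- sublinear function and cone
  set T : Set ((X × Y) × (X × Y)) :=
    {t | t.1 ∈ clarkeTangentCone A1 v1 ∧ t.2 ∈ clarkeTangentCone A2 v2} with hTdef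
  set φ : (X × Y) × (X × Y) → ℝ :=
    fun t => Dlow u0 (t.1 - t.2) + 4*ε*(‖t.1‖ + ‖t.2‖) with hφdef
  have hDlow0 : Dlow u0 (0 : X × Y) = 0 := by
    have h1 := Dlow_le_norm u0 (0 : X × Y)
    have h2 := neg_norm_le_Dlow u0 (0 : X × Y)
    rw [norm_zero] at h1 h2
    linarith
  have hT0 : (0 : (X × Y) × (X × Y)) ∈ T := ⟨zero_mem_ctc A1 v1, zero_mem_ctc A2 v2⟩
  have hTadd : ∀ a ∈ T, ∀ b ∈ T, a + b ∈ T := by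
    rintro a ⟨ha1, ha2⟩ b ⟨hb1, hb2⟩
    exact ⟨add_mem_ctc ha1 hb1, add_mem_ctc ha2 hb2⟩
  have hTsmul : ∀ c : ℝ, 0 < c → ∀ a ∈ T, c • a ∈ T := by
    rintro c hc a ⟨ha1, ha2⟩
    exact ⟨smul_mem_ctc hc ha1, smul_mem_ctc hc ha2⟩
  have hφ0 : φ 0 = 0 := by
    simp only [hφdef, Prod.fst_zero, Prod.snd_zero, sub_zero, norm_zero, hDlow0]
    ring
  have hφadd : ∀ x y, φ (x + y) ≤ φ x + φ y := by
    intro x y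
    simp only [hφdef, Prod.fst_add, Prod.snd_add]
    have h1 : (x.1 + y.1) - (x.2 + y.2) = (x.1 - x.2) + (y.1 - y.2) := by abel
    rw [h1]
    have h2 := Dlow_add_le u0 (x.1 - x.2) (y.1 - y.2)
    have h3 : ‖x.1 + y.1‖ ≤ ‖x.1‖ + ‖y.1‖ := norm_add_le _ _
    have h4 : ‖x.2 + y.2‖ ≤ ‖x.2‖ + ‖y.2‖ := norm_add_le _ _
    nlinarith [hε]
  have hφsmul : ∀ c : ℝ, 0 < c → ∀ x, φ (c • x) = c * φ x := by
    intro c hc x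
    simp only [hφdef, Prod.smul_fst, Prod.smul_snd]
    have h1 : c • x.1 - c • x.2 = c • (x.1 - x.2) := by module
    rw [h1, Dlow_smul u0 hc, norm_smul, norm_smul, Real.norm_of_nonneg hc.le]
    ring
  have hφT : ∀ t ∈ T, 0 ≤ φ t := by
    rintro t ⟨ht1, ht2⟩
    have h1 : -(4*ε*(‖t.1‖ + ‖t.2‖)) ≤ Dlow u0 (t.1 - t.2) := by
      refine le_csInf (DQ_nonempty u0 (t.1 - t.2)) ?_
      rintro r ⟨s, hs, rfl⟩
      exact hkey t.1 ht1 t.2 ht2 s hs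
    simp only [hφdef]
    linarith
  set d : (X × Y) × (X × Y) := (u0, -u0) with hddef
  have hd : d ≠ 0 := by
    intro h
    exact hu0 (congrArg Prod.fst h)
  obtain ⟨g, hg1, hg2, hg3⟩ := sandwich_lemma φ T hT0 hTadd hTsmul hφ0 hφadd hφsmul hφT d hd
  -- φ(-d) bound
  have hφnd : φ (-d) ≤ (-2 + 8*ε) * ‖u0‖ := by
    have h1 : Dlow u0 (-u0 - u0) ≤ -2*‖u0‖ := by
      have hw : DQ u0 (-u0 - u0) (1/2) = -2*‖u0‖ := by
        rw [DQ]
        have : u0 + (1/2 : ℝ) • (-u0 - u0) = 0 := by module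
        rw [this, norm_zero]
        ring
      have := Dlow_le_DQ u0 (-u0 - u0) (by norm_num : (0:ℝ) < 1/2)
      rw [hw] at this
      exact this
    have h2 : φ (-d) = Dlow u0 (-u0 - u0) + 4*ε*(‖u0‖ + ‖u0‖) := by
      simp only [hφdef, hddef, Prod.fst_neg, Prod.snd_neg, norm_neg, neg_neg]
    rw [h2]
    nlinarith [hnu0]
  have hgd : (2 - 8*ε) * ‖u0‖ ≤ g d := by
    have h1 := hg3
    nlinarith [hφnd]
  have hφub : ∀ x : (X × Y) × (X × Y), φ x ≤ (1+4*ε) * (‖x.1‖ + ‖x.2‖) := by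
    intro x
    have h1 : Dlow u0 (x.1 - x.2) ≤ ‖x.1 - x.2‖ := Dlow_le_norm _ _
    have h2 : ‖x.1 - x.2‖ ≤ ‖x.1‖ + ‖x.2‖ := norm_sub_le _ _
    simp only [hφdef]
    nlinarith [hε, norm_nonneg x.1, norm_nonneg x.2]
  have hgub : ∀ x : (X × Y) × (X × Y), ‖g x‖ ≤ (2*(1+4*ε)) * ‖x‖ := by
    intro x
    have h5 : ‖x.1‖ ≤ ‖x‖ := norm_fst_le x
    have h6 : ‖x.2‖ ≤ ‖x‖ := norm_snd_le x
    have hxn : 0 ≤ ‖x‖ := norm_nonneg x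
    rw [Real.norm_eq_abs, abs_le]
    constructor
    · have h2 := (hg1 (-x)).trans (hφub (-x))
      have h3 : ‖(-x).1‖ = ‖x.1‖ := by simp
      have h4 : ‖(-x).2‖ = ‖x.2‖ := by simp
      rw [h3, h4] at h2
      have h7 : g (-x) = -(g x) := map_neg g x
      rw [h7] at h2
      nlinarith [hε]
    · have h2 := (hg1 x).trans (hφub x)
      nlinarith [hε]
  set G : ((X × Y) × (X × Y)) →L[ℝ] ℝ := g.mkContinuous (2*(1+4*ε)) hgub with hGdef
  have hGapp : ∀ x, G x = g x := fun x => rfl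
  set q1 : (X × Y) →L[ℝ] ℝ := -(G.comp (ContinuousLinearMap.inl ℝ (X × Y) (X × Y))) with hq1def
  set q2 : (X × Y) →L[ℝ] ℝ := -(G.comp (ContinuousLinearMap.inr ℝ (X × Y) (X × Y))) with hq2def
  have hq1app : ∀ p : X × Y, q1 p = -(g (p, 0)) := fun p => rfl
  have hq2app : ∀ p : X × Y, q2 p = -(g (0, p)) := fun p => rfl
  set x1s : X →L[ℝ] ℝ := q1.comp (ContinuousLinearMap.inl ℝ X Y) with hx1sdef
  set y1s : Y →L[ℝ] ℝ := q1.comp (ContinuousLinearMap.inr ℝ X Y) with hy1sdef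
  set x2s : X →L[ℝ] ℝ := q2.comp (ContinuousLinearMap.inl ℝ X Y) with hx2sdef
  set y2s : Y →L[ℝ] ℝ := q2.comp (ContinuousLinearMap.inr ℝ X Y) with hy2sdef
  have hcop1 : x1s.coprod y1s = q1 := by
    refine ContinuousLinearMap.ext fun p => ?_
    rw [ContinuousLinearMap.coprod_apply, hx1sdef, hy1sdef,
      ContinuousLinearMap.comp_apply, ContinuousLinearMap.comp_apply,
      ContinuousLinearMap.inl_apply, ContinuousLinearMap.inr_apply, ← map_add q1]
    congr 1
    simp
  have hcop2 : x2s.coprod y2s = q2 := by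
    refine ContinuousLinearMap.ext fun p => ?_
    rw [ContinuousLinearMap.coprod_apply, hx2sdef, hy2sdef,
      ContinuousLinearMap.comp_apply, ContinuousLinearMap.comp_apply,
      ContinuousLinearMap.inl_apply, ContinuousLinearMap.inr_apply, ← map_add q2]
    congr 1
    simp
  -- lower bound for the sum of norms
  have habsq : ∀ p : X × Y, |q1 p| ≤ (‖x1s‖ + ‖y1s‖) * ‖p‖ ∧ |q2 p| ≤ (‖x2s‖ + ‖y2s‖) * ‖p‖ := by
    intro p
    have hp1 : ‖p.1‖ ≤ ‖p‖ := norm_fst_le p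
    have hp2 : ‖p.2‖ ≤ ‖p‖ := norm_snd_le p
    have hpn : 0 ≤ ‖p‖ := norm_nonneg p
    constructor
    · have h1 : q1 p = x1s p.1 + y1s p.2 := by
        rw [← hcop1, ContinuousLinearMap.coprod_apply]
      rw [h1]
      have h2 : |x1s p.1 + y1s p.2| ≤ |x1s p.1| + |y1s p.2| := abs_add_le _ _
      have h3 : |x1s p.1| ≤ ‖x1s‖ * ‖p.1‖ := x1s.le_opNorm p.1
      have h4 : |y1s p.2| ≤ ‖y1s‖ * ‖p.2‖ := y1s.le_opNorm p.2
      have h5 : ‖x1s‖ * ‖p.1‖ ≤ ‖x1s‖ * ‖p‖ := mul_le_mul_of_nonneg_left hp1 (norm_nonneg _)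
      have h6 : ‖y1s‖ * ‖p.2‖ ≤ ‖y1s‖ * ‖p‖ := mul_le_mul_of_nonneg_left hp2 (norm_nonneg _)
      linarith
    · have h1 : q2 p = x2s p.1 + y2s p.2 := by
        rw [← hcop2, ContinuousLinearMap.coprod_apply]
      rw [h1]
      have h2 : |x2s p.1 + y2s p.2| ≤ |x2s p.1| + |y2s p.2| := abs_add_le _ _
      have h3 : |x2s p.1| ≤ ‖x2s‖ * ‖p.1‖ := x2s.le_opNorm p.1
      have h4 : |y2s p.2| ≤ ‖y2s‖ * ‖p.2‖ := y2s.le_opNorm p.2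
      have h5 : ‖x2s‖ * ‖p.1‖ ≤ ‖x2s‖ * ‖p‖ := mul_le_mul_of_nonneg_left hp1 (norm_nonneg _)
      have h6 : ‖y2s‖ * ‖p.2‖ ≤ ‖y2s‖ * ‖p‖ := mul_le_mul_of_nonneg_left hp2 (norm_nonneg _)
      linarith
  set σ : ℝ := (‖x1s‖ + ‖y1s‖) + (‖x2s‖ + ‖y2s‖) with hσdef
  have hσ : 2 - 8*ε ≤ σ := by
    have hgd2 : g d = q2 u0 - q1 u0 := by
      have h1 : d = ((u0, (0 : X × Y)) : (X × Y) × (X × Y)) + ((0 : X × Y), -u0) := by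
        simp [hddef, Prod.mk_add_mk]
      rw [h1, map_add]
      have h2 : g ((u0 : X × Y), (0 : X × Y)) = -(q1 u0) := by rw [hq1app]; ring
      have h3 : g (((0 : X × Y), -u0) : (X × Y) × (X × Y)) = q2 u0 := by
        have h4 : (((0 : X × Y), -u0) : (X × Y) × (X × Y)) = -((0 : X × Y), u0) := by
          simp
        rw [h4, map_neg, hq2app]
      rw [h2, h3]; ring
    have h5 := (habsq u0).1
    have h6 := (habsq u0).2
    have h7 : g d ≤ σ * ‖u0‖ := by
      rw [hgd2, hσdef]
      have := abs_le.mp h5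
      have := abs_le.mp h6
      nlinarith [hnu0]
    have h8 : (2 - 8*ε) * ‖u0‖ ≤ σ * ‖u0‖ := le_trans hgd h7
    exact le_of_mul_le_mul_right h8 hnu0
  have hσ1 : 1 ≤ σ := by linarith [hε9]
  have hσ0 : 0 < σ := by linarith
  -- small-sum bounds
  have hgh : ∀ h : X × Y, |g ((h, h) : (X × Y) × (X × Y))| ≤ 8*ε*‖h‖ := by
    intro h
    have hφhh : φ ((h, h) : (X × Y) × (X × Y)) = 8*ε*‖h‖ := by
      simp only [hφdef, sub_self, hDlow0]
      ring
    have hφnn : φ ((-h, -h) : (X × Y) × (X × Y)) = 8*ε*‖h‖ := by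
      simp only [hφdef, sub_self, hDlow0, norm_neg]
      ring
    rw [abs_le]
    have h2 : (((-h, -h)) : (X × Y) × (X × Y)) = -((h, h) : (X × Y) × (X × Y)) := by simp
    have h1 : g (((-h, -h)) : (X × Y) × (X × Y)) ≤ 8*ε*‖h‖ := (hg1 _).trans_eq hφnn
    have h4 : g (((-h, -h)) : (X × Y) × (X × Y)) = -(g ((h, h) : (X × Y) × (X × Y))) := by
      rw [h2, map_neg]
    constructor
    · linarith
    · exact (hg1 _).trans_eq hφhh
  have hnormx : ∀ a : X, ‖((a, (0:Y)) : X × Y)‖ = ‖a‖ := by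
    intro a
    rw [Prod.norm_def]
    simp [max_eq_left (norm_nonneg a)]
  have hnormy : ∀ b : Y, ‖(((0:X), b) : X × Y)‖ = ‖b‖ := by
    intro b
    rw [Prod.norm_def]
    simp [max_eq_right (norm_nonneg b)]
  have hsx : ‖x1s + x2s‖ ≤ 8*ε := by
    apply ContinuousLinearMap.opNorm_le_bound _ (by positivity)
    intro a
    have h1 : (x1s + x2s) a = q1 (a, 0) + q2 (a, 0) := by
      rw [ContinuousLinearMap.add_apply, hx1sdef, hx2sdef, ContinuousLinearMap.comp_apply,
        ContinuousLinearMap.comp_apply, ContinuousLinearMap.inl_apply]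
    have h2 : q1 ((a : X), (0:Y)) + q2 ((a : X), (0:Y))
        = -(g ((((a, 0) : X × Y), ((a, 0) : X × Y)))) := by
      have h3 : ((((a, 0) : X × Y), (0 : X × Y)) : (X × Y) × (X × Y))
          + ((0 : X × Y), ((a, 0) : X × Y)) = (((a, 0) : X × Y), ((a, 0) : X × Y)) := by
        simp
      rw [hq1app, hq2app, ← neg_add, ← map_add, h3]
    rw [h1, h2, Real.norm_eq_abs, abs_neg]
    calc |g ((((a, 0) : X × Y), ((a, 0) : X × Y)))| ≤ 8*ε*‖((a, 0) : X × Y)‖ := hgh _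
    _ = 8*ε*‖a‖ := by rw [hnormx]
  have hsy : ‖y1s + y2s‖ ≤ 8*ε := by
    apply ContinuousLinearMap.opNorm_le_bound _ (by positivity)
    intro b
    have h1 : (y1s + y2s) b = q1 (0, b) + q2 (0, b) := by
      rw [ContinuousLinearMap.add_apply, hy1sdef, hy2sdef, ContinuousLinearMap.comp_apply,
        ContinuousLinearMap.comp_apply, ContinuousLinearMap.inr_apply]
    have h2 : q1 ((0:X), (b : Y)) + q2 ((0:X), (b : Y))
        = -(g ((((0, b) : X × Y), ((0, b) : X × Y)))) := by
      have h3 : ((((0, b) : X × Y), (0 : X × Y)) : (X × Y) × (X × Y))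
          + ((0 : X × Y), ((0, b) : X × Y)) = (((0, b) : X × Y), ((0, b) : X × Y)) := by
        simp
      rw [hq1app, hq2app, ← neg_add, ← map_add, h3]
    rw [h1, h2, Real.norm_eq_abs, abs_neg]
    calc |g ((((0, b) : X × Y), ((0, b) : X × Y)))| ≤ 8*ε*‖(((0:X), b) : X × Y)‖ := hgh _
    _ = 8*ε*‖b‖ := by rw [hnormy]
  -- nonnegativity of q's on tangent directions
  have hq1neg : ∀ z ∈ clarkeTangentCone A1 v1, q1 z ≤ 0 := by
    intro z hz
    have h1 : ((z, (0 : X × Y)) : (X × Y) × (X × Y)) ∈ T := ⟨hz, zero_mem_ctc A2 v2⟩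
    have h2 := hg2 _ h1
    rw [hq1app]
    linarith
  have hq2neg : ∀ z ∈ clarkeTangentCone A2 v2, q2 z ≤ 0 := by
    intro z hz
    have h1 : (((0 : X × Y), z) : (X × Y) × (X × Y)) ∈ T := ⟨zero_mem_ctc A1 v1, hz⟩
    have h2 := hg2 _ h1
    rw [hq2app]
    linarith
  -- location bounds
  have hz1dist : dist z1 (xbar, ybar) < ε := mem_ball.mp hz1b
  have hz2dist : dist z2 (xbar, ybar) < ε := mem_ball.mp hz2b
  have hv1loc : dist v1 (xbar, ybar) < ε0 := by
    have h1 := dist_triangle v1 z1 (xbar, ybar)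
    linarith [hv1z1, hρε, hε17, hz1dist]
  have hv2loc : dist v2 (xbar, ybar) < ε0 := by
    have h1 := dist_triangle v2 z2 (xbar, ybar)
    linarith [hv2z2, hρε, hε17, hz2dist]
  have hv2A' : v2 ∈ Ω ×ˢ A := hA2eq ▸ hv2A
  set c : ℝ := σ⁻¹ with hcdef
  have hc0 : 0 < c := inv_pos.mpr hσ0
  have hc1 : c ≤ 1 := by
    rw [hcdef]
    exact inv_le_one_of_one_le₀ hσ1
  refine ⟨v1.1, v1.2, ⟨?_, ?_⟩, v2.1, ⟨⟨?_, ?_⟩, A, hAΞ, v2.2, ⟨⟨hv2A'.2, ?_⟩,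
    c • x1s, c • y1s, c • x2s, c • y2s, ?_, ?_, ?_, ?_, ?_⟩⟩⟩
  · exact hA1 ▸ hv1A
  · exact mem_ball.mpr hv1loc
  · exact hv2A'.1
  · rw [mem_ball]
    calc dist v2.1 xbar ≤ dist v2 (xbar, ybar) := by
          rw [Prod.dist_eq]; exact le_max_left _ _
    _ < ε0 := hv2loc
  · rw [mem_ball]
    calc dist v2.2 ybar ≤ dist v2 (xbar, ybar) := by
          rw [Prod.dist_eq]; exact le_max_right _ _
    _ < ε0 := hv2loc
  · -- coprod in normal cone of gph F
    have hcops : (c • x1s).coprod (c • y1s) = c • q1 := by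
      refine ContinuousLinearMap.ext fun p => ?_
      rw [ContinuousLinearMap.coprod_apply, ContinuousLinearMap.smul_apply,
        ContinuousLinearMap.smul_apply, ContinuousLinearMap.smul_apply,
        ← hcop1, ContinuousLinearMap.coprod_apply, smul_eq_mul, smul_eq_mul, smul_eq_mul]
      ring
    rw [hcops]
    constructor
    · exact hA1 ▸ hv1A
    · intro z hz
      have hz' : z ∈ clarkeTangentCone A1 v1 := by rw [hA1]; exact hz
      have h1 := hq1neg z hz'
      rw [ContinuousLinearMap.smul_apply, smul_eq_mul]
      exact mul_nonpos_of_nonneg_of_nonpos hc0.le h1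
  · -- x2s in normal cone of Ω
    constructor
    · exact hv2A'.1
    · intro z hz
      have h1 : ((z, (0:Y)) : X × Y) ∈ clarkeTangentCone A2 v2 := by
        rw [hA2eq]
        exact prod_mem_ctc hz (zero_mem_ctc A v2.2)
      have h2 := hq2neg _ h1
      have h3 : (c • x2s) z = c * (q2 ((z, (0:Y)) : X × Y)) := by
        rw [ContinuousLinearMap.smul_apply, smul_eq_mul, hx2sdef,
          ContinuousLinearMap.comp_apply, ContinuousLinearMap.inl_apply]
      rw [h3]
      exact mul_nonpos_of_nonneg_of_nonpos hc0.le h2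
  · -- y2s in normal cone of A
    constructor
    · exact hv2A'.2
    · intro z hz
      have h1 : (((0:X), z) : X × Y) ∈ clarkeTangentCone A2 v2 := by
        rw [hA2eq]
        exact prod_mem_ctc (zero_mem_ctc Ω v2.1) hz
      have h2 := hq2neg _ h1
      have h3 : (c • y2s) z = c * (q2 (((0:X), z) : X × Y)) := by
        rw [ContinuousLinearMap.smul_apply, smul_eq_mul, hy2sdef,
          ContinuousLinearMap.comp_apply, ContinuousLinearMap.inr_apply]
      rw [h3]
      exact mul_nonpos_of_nonneg_of_nonpos hc0.le h2
  · -- small sum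
    have h1 : c • x1s + c • x2s = c • (x1s + x2s) := (smul_add c x1s x2s).symm
    have h2 : c • y1s + c • y2s = c • (y1s + y2s) := (smul_add c y1s y2s).symm
    rw [h1, h2]
    have hn1 : ‖c • (x1s + x2s)‖ = c * ‖x1s + x2s‖ := by
      rw [norm_smul c (x1s + x2s), Real.norm_eq_abs, abs_of_pos hc0]
    have hn2 : ‖c • (y1s + y2s)‖ = c * ‖y1s + y2s‖ := by
      rw [norm_smul c (y1s + y2s), Real.norm_eq_abs, abs_of_pos hc0]
    rw [hn1, hn2]
    have h3 : c * ‖x1s + x2s‖ + c * ‖y1s + y2s‖ ≤ 1 * (8*ε) + 1 * (8*ε) := by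
      have := norm_nonneg (x1s + x2s)
      have := norm_nonneg (y1s + y2s)
      nlinarith [hc0.le]
    have h4 : 16 * ε < ε0 := by
      have : 16 * ε ≤ 16 * (ε0/17) := by linarith [hε17]
      linarith
    linarith
  · -- sum of norms equals 1
    have hn1 : ‖c • x1s‖ = c * ‖x1s‖ := by
      rw [norm_smul c x1s, Real.norm_eq_abs, abs_of_pos hc0]
    have hn2 : ‖c • y1s‖ = c * ‖y1s‖ := by
      rw [norm_smul c y1s, Real.norm_eq_abs, abs_of_pos hc0]
    have hn3 : ‖c • x2s‖ = c * ‖x2s‖ := by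
      rw [norm_smul c x2s, Real.norm_eq_abs, abs_of_pos hc0]
    have hn4 : ‖c • y2s‖ = c * ‖y2s‖ := by
      rw [norm_smul c y2s, Real.norm_eq_abs, abs_of_pos hc0]
    rw [hn1, hn2, hn3, hn4]
    have h1 : c * ‖x1s‖ + c * ‖y1s‖ + (c * ‖x2s‖ + c * ‖y2s‖) = c * σ := by
      rw [hσdef]; ring
    rw [h1, hcdef]
    exact inv_mul_cancel₀ (ne_of_gt hσ0)


end
end

section
/- Let X and Y be normed spaces, Ω ⊂ X, F : X ⇉ Y, L : Y ⇉ Y, x̄ ∈ Ω, ȳ ∈ F(x̄), δ > 0, and let Ξ^δ := {cl L(y) : y ∈ L⁻(ȳ) ∩ B_δ(ȳ)}. Suppose L satisfies properties (O1) and (O5) at ȳ. If (x̄,ȳ) is extremal for F on Ω (i.e. there is ρ ∈ (0,+∞] with F(Ω ∩ B_ρ(x̄)) ∩ L°(ȳ) ∩ B_ρ(ȳ) = ∅), then the triple {F, Ω, Ξ^δ} is extremal at (x̄,ȳ). -/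
open Set Filter Metric Topology Pointwise
open scoped ENNReal

noncomputable section

variable {X Y Z : Type*}

/-- Property (O1): liminf_{y → ybar, y ∈ L(ybar)\{ybar}} d(ybar, L(y)) = 0,
with the infimum over the empty set equal to +∞. -/
def PropO1 {Y : Type*} [NormedAddCommGroup Y] (L : Y → Set Y) (ybar : Y) : Prop :=
  (⨆ (δ : ℝ) (_ : 0 < δ), ⨅ y ∈ (L ybar \ {ybar}) ∩ ball ybar δ,
    EMetric.infEdist ybar (L y)) = 0

theorem statement17 {X Y : Type*} [NormedAddCommGroup X] [NormedSpace ℝ X]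
    [NormedAddCommGroup Y] [NormedSpace ℝ Y] (Ω : Set X) (F : X → Set Y)
    (L : Y → Set Y) (xbar : X) (ybar : Y) (hx : xbar ∈ Ω) (hy : ybar ∈ F xbar)
    (δ : ℝ) (hδ : 0 < δ) (hO1 : PropO1 L ybar)
    (hO5 : ∀ y ∈ L ybar \ {ybar}, ∀ v ∈ closure (L y), v ∈ L ybar \ {ybar})
    (hext : ∃ ρ : ℝ≥0∞, 0 < ρ ∧
      (⋃ x ∈ Ω ∩ EMetric.ball xbar ρ, F x) ∩ (L ybar \ {ybar}) ∩
        EMetric.ball ybar ρ = ∅) :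
    pairExtremal (Xi1 F)
      (Xi2 Ω {S | ∃ y ∈ (L ybar ∪ {ybar}) ∩ ball ybar δ, S = closure (L y)})
      (xbar, ybar) := by
  obtain ⟨ρ, hρ, hempty⟩ := hext
  refine ⟨ρ, hρ, fun ε hε => ?_⟩
  -- From (O1) with our δ
  have h1 : (⨅ y ∈ (L ybar \ {ybar}) ∩ ball ybar δ, EMetric.infEdist ybar (L y)) = 0 := by
    refine le_antisymm ?_ zero_le
    calc (⨅ y ∈ (L ybar \ {ybar}) ∩ ball ybar δ, EMetric.infEdist ybar (L y))
        ≤ ⨆ (δ' : ℝ) (_ : 0 < δ'), ⨅ y ∈ (L ybar \ {ybar}) ∩ ball ybar δ',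
            EMetric.infEdist ybar (L y) := le_iSup₂ (f := fun δ' _ =>
              ⨅ y ∈ (L ybar \ {ybar}) ∩ ball ybar δ', EMetric.infEdist ybar (L y)) δ hδ
      _ = 0 := hO1
  have hlt : (⨅ y ∈ (L ybar \ {ybar}) ∩ ball ybar δ, EMetric.infEdist ybar (L y))
      < ENNReal.ofReal ε := by
    rw [h1]; exact ENNReal.ofReal_pos.mpr hε
  simp only [iInf_lt_iff] at hlt
  obtain ⟨y, ⟨hyL, hyball⟩, hyinf⟩ := hlt
  obtain ⟨v, hvL, hvd⟩ := EMetric.infEdist_lt_iff.mp hyinf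
  refine ⟨gph F, rfl, Ω ×ˢ closure (L y),
    ⟨closure (L y), ⟨y, ⟨Or.inl hyL.1, hyball⟩, rfl⟩, rfl⟩, ?_, ?_, ?_⟩
  · rw [show EMetric.infEdist (xbar, ybar) (gph F) = 0 from
      EMetric.infEdist_zero_of_mem (show (xbar, ybar) ∈ gph F from hy)]
    exact ENNReal.ofReal_pos.mpr hε
  · refine EMetric.infEdist_lt_iff.mpr ⟨(xbar, v), ⟨hx, subset_closure hvL⟩, ?_⟩
    rw [Prod.edist_eq]
    simp only [edist_self]
    exact max_lt (ENNReal.ofReal_pos.mpr hε) hvd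
  · rw [eq_empty_iff_forall_notMem]
    rintro ⟨x, w⟩ ⟨⟨hgF, hxΩ, hwcl⟩, hball⟩
    have hw : w ∈ L ybar \ {ybar} := hO5 y ⟨hyL.1, hyL.2⟩ w hwcl
    replace hball := EMetric.mem_ball.mp hball
    rw [Prod.edist_eq, max_lt_iff] at hball
    rw [eq_empty_iff_forall_notMem] at hempty
    exact hempty w ⟨⟨mem_iUnion₂.mpr ⟨x, ⟨hxΩ, hball.1⟩, hgF⟩, hw⟩,
      EMetric.mem_ball.mpr hball.2⟩

end
end
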